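/- With β₀ as in the twelve-point example, the convex envelope satisfies β₀**(y) = max(L₁(y), L₂(y), L₃(y)) on the convex hull of the twelve points, where L₁(y) = 0, L₂(y) = y₁ + y₂ − y₃ − 1, L₃(y) = 2y₁ − y₃ − 1; moreover β₀** agrees with β₀ at all twelve points. -/

import Mathlib

open scoped BigOperators

/-- The twelve-point submodular function β₀ on ℝ³. -/
noncomputable def β₀ (x : Fin 3 → ℝ) : EReal :=
  if x = ![0,0,1] ∨ x = ![1,0,1] ∨ x = ![0,1,1] ∨ x = ![1,1,1] ∨
     x = ![0,0,0] ∨ x = ![0,1,0] ∨ x = ![0,0,-1] then (0 : EReal)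
  else if x = ![1,0,0] ∨ x = ![1,1,0] ∨ x = ![0,1,-1] then (1 : EReal)
  else if x = ![1,0,-1] ∨ x = ![1,1,-1] then (2 : EReal)
  else ⊤

/-- The twelve points. -/
def twelvePoints : Set (Fin 3 → ℝ) :=
  {![0,0,1], ![1,0,1], ![0,1,1], ![1,1,1],
   ![0,0,0], ![1,0,0], ![0,1,0], ![1,1,0],
   ![0,0,-1], ![1,0,-1], ![0,1,-1], ![1,1,-1]}

/-- Convex conjugate of a function on ℝ³. -/
noncomputable def convConj3 (f : (Fin 3 → ℝ) → EReal) (y : Fin 3 → ℝ) : EReal :=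
  ⨆ x : Fin 3 → ℝ, ((∑ i : Fin 3, x i * y i : ℝ) : EReal) - f x

noncomputable def L₁ (_y : Fin 3 → ℝ) : ℝ := 0
noncomputable def L₂ (y : Fin 3 → ℝ) : ℝ := y 0 + y 1 - y 2 - 1
noncomputable def L₃ (y : Fin 3 → ℝ) : ℝ := 2 * y 0 - y 2 - 1

/-!
β₀ is finite exactly on the twelve points, and there it coincides with
`M = max L₁ L₂ L₃`. Each `Lᵢ` is affine and lies below β₀, hence below β₀**;
so `M ≤ β₀**` everywhere. Conversely, the convex hull of the twelve points is the box
`[0,1]² × [-1,1]`, which is cut into seven lattice tetrahedra on each of which `M` is one of the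
`Lᵢ`. As β₀** is convex and lies below β₀ = `Lᵢ` at the vertices, `β₀** ≤ Lᵢ ≤ M` on each of them.
-/

section Biconjugate

variable {f : (Fin 3 → ℝ) → EReal} {L : (Fin 3 → ℝ) → ℝ} {a : Fin 3 → ℝ} {c : ℝ}

theorem convConj3_convConj3_le_self (x : Fin 3 → ℝ) : convConj3 (convConj3 f) x ≤ f x := by
  refine iSup_le fun a => ?_
  have hfx : ((∑ i, x i * a i : ℝ) : EReal) - f x ≤ convConj3 f a :=
    le_iSup (fun x => ((∑ i, x i * a i : ℝ) : EReal) - f x) x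
  simp_rw [mul_comm (a _)]
  generalize f x = v at hfx ⊢
  induction v using EReal.rec with
  | bot => simp_all
  | top => exact le_top
  | coe r =>
    calc ((∑ i, x i * a i : ℝ) : EReal) - convConj3 f a
        ≤ ((∑ i, x i * a i : ℝ) : EReal) - ((∑ i, x i * a i - r : ℝ) : EReal) :=
          EReal.sub_le_sub le_rfl hfx
      _ = r := by norm_cast; ring_nf

theorem le_convConj3_convConj3_of_le (hL : ∀ x, L x = ∑ i, x i * a i - c)
    (h : ∀ x, (L x : EReal) ≤ f x) (y : Fin 3 → ℝ) :
    (L y : EReal) ≤ convConj3 (convConj3 f) y := by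
  have hconj : convConj3 f a ≤ c := iSup_le fun x =>
    calc ((∑ i, x i * a i : ℝ) : EReal) - f x
        ≤ ((∑ i, x i * a i : ℝ) : EReal) - ((∑ i, x i * a i - c : ℝ) : EReal) :=
          EReal.sub_le_sub le_rfl (hL x ▸ h x)
      _ = c := by norm_cast; ring_nf
  calc (L y : EReal)
      = ((∑ i, a i * y i : ℝ) : EReal) - c := by simp_rw [hL, mul_comm (a _)]; norm_cast
    _ ≤ ((∑ i, a i * y i : ℝ) : EReal) - convConj3 f a := EReal.sub_le_sub le_rfl hconj
    _ ≤ convConj3 (convConj3 f) y :=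
      le_iSup (fun a => ((∑ i, a i * y i : ℝ) : EReal) - convConj3 f a) a

theorem convex_setOf_convConj3_convConj3_le (hL : ∀ x, L x = ∑ i, x i * a i - c) :
    Convex ℝ {y | convConj3 (convConj3 f) y ≤ L y} := by
  intro y hy z hz s t hs ht hst
  simp only [Set.mem_ofPred_eq, hL] at hy hz ⊢
  rw [convConj3, iSup_le_iff] at hy hz ⊢
  intro b
  have hyb := hy b
  have hzb := hz b
  generalize convConj3 f b = v at hyb hzb ⊢
  induction v using EReal.rec with
  | bot => rw [EReal.coe_sub_bot, top_le_iff] at hyb; exact absurd hyb (EReal.coe_ne_top _)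
  | top => simp
  | coe r =>
    norm_cast at hyb hzb ⊢
    have hb : ∑ i, b i * (s • y + t • z) i = s * ∑ i, b i * y i + t * ∑ i, b i * z i := by
      simp only [Pi.add_apply, Pi.smul_apply, smul_eq_mul, Fin.sum_univ_three]; ring
    have ha : ∑ i, (s • y + t • z) i * a i = s * ∑ i, y i * a i + t * ∑ i, z i * a i := by
      simp only [Pi.add_apply, Pi.smul_apply, smul_eq_mul, Fin.sum_univ_three]; ring
    rw [ha, hb]
    obtain rfl : t = 1 - s := by linarith
    nlinarith [mul_le_mul_of_nonneg_left hyb hs, mul_le_mul_of_nonneg_left hzb ht]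

theorem convConj3_convConj3_le_of_mem_convexHull (hL : ∀ x, L x = ∑ i, x i * a i - c)
    {y : Fin 3 → ℝ} (hy : y ∈ convexHull ℝ {x | f x ≤ L x}) :
    convConj3 (convConj3 f) y ≤ L y :=
  convexHull_min (fun x hx => (convConj3_convConj3_le_self x).trans hx)
    (convex_setOf_convConj3_convConj3_le hL) hy

end Biconjugate

theorem L₁_eq (x : Fin 3 → ℝ) : L₁ x = ∑ i, x i * 0 - 0 := by simp [L₁]

theorem L₂_eq (x : Fin 3 → ℝ) : L₂ x = ∑ i, x i * ![1, 1, -1] i - 1 := by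
  simp only [L₂, Fin.sum_univ_three, Matrix.cons_val]; ring

theorem L₃_eq (x : Fin 3 → ℝ) : L₃ x = ∑ i, x i * ![2, 0, -1] i - 1 := by
  simp only [L₃, Fin.sum_univ_three, Matrix.cons_val]; ring

theorem β₀_of_notMem {x : Fin 3 → ℝ} (hx : x ∉ twelvePoints) : β₀ x = ⊤ := by
  simp only [twelvePoints, Set.mem_insert_iff, Set.mem_singleton_iff] at hx
  rw [β₀, if_neg (by tauto), if_neg (by tauto), if_neg (by tauto)]

theorem β₀_eq_max_of_mem {x : Fin 3 → ℝ} (hx : x ∈ twelvePoints) :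
    β₀ x = ((max (max (L₁ x) (L₂ x)) (L₃ x) : ℝ) : EReal) := by
  simp only [twelvePoints, Set.mem_insert_iff, Set.mem_singleton_iff] at hx
  rcases hx with rfl | rfl | rfl | rfl | rfl | rfl | rfl | rfl | rfl | rfl | rfl | rfl <;>
    norm_num [β₀, L₁, L₂, L₃, funext_iff, Fin.forall_fin_succ, Matrix.cons_val_two,
      show ((2 : ℝ) : EReal) = 2 from rfl]

theorem max_le_β₀ (x : Fin 3 → ℝ) : ((max (max (L₁ x) (L₂ x)) (L₃ x) : ℝ) : EReal) ≤ β₀ x := by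
  by_cases hx : x ∈ twelvePoints
  · exact (β₀_eq_max_of_mem hx).ge
  · exact (β₀_of_notMem hx).symm ▸ le_top

theorem max_le_convConj3_convConj3_β₀ (y : Fin 3 → ℝ) :
    ((max (max (L₁ y) (L₂ y)) (L₃ y) : ℝ) : EReal) ≤ convConj3 (convConj3 β₀) y := by
  have h {L : (Fin 3 → ℝ) → ℝ} {a : Fin 3 → ℝ} {c : ℝ} (hL : ∀ x, L x = ∑ i, x i * a i - c)
      (hLM : ∀ x, L x ≤ max (max (L₁ x) (L₂ x)) (L₃ x)) :
      (L y : EReal) ≤ convConj3 (convConj3 β₀) y :=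
    le_convConj3_convConj3_of_le hL
      (fun x => (EReal.coe_le_coe_iff.2 (hLM x)).trans (max_le_β₀ x)) y
  simp only [Monotone.map_max EReal.coe_strictMono.monotone]
  exact max_le (max_le (h L₁_eq fun x => le_max_of_le_left (le_max_left _ _))
    (h L₂_eq fun x => le_max_of_le_left (le_max_right _ _))) (h L₃_eq fun x => le_max_right _ _)

theorem convexHull_twelvePoints_subset_Icc :
    convexHull ℝ twelvePoints ⊆ Set.Icc ![0, 0, -1] ![1, 1, 1] := by
  refine convexHull_min (fun x hx => ?_) (convex_Icc _ _)
  simp only [twelvePoints, Set.mem_insert_iff, Set.mem_singleton_iff] at hx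
  rcases hx with rfl | rfl | rfl | rfl | rfl | rfl | rfl | rfl | rfl | rfl | rfl | rfl <;>
    simp [Pi.le_def, Fin.forall_fin_succ]

section Tetrahedra

variable {y : Fin 3 → ℝ}

theorem convConj3_convConj3_β₀_le_of_tetrahedron {L : (Fin 3 → ℝ) → ℝ} {a : Fin 3 → ℝ} {c : ℝ}
    (hL : ∀ x, L x = ∑ i, x i * a i - c) (w₀ w₁ w₂ w₃ : ℝ) (p₀ p₁ p₂ p₃ : Fin 3 → ℝ)
    (hw : 0 ≤ w₀ ∧ 0 ≤ w₁ ∧ 0 ≤ w₂ ∧ 0 ≤ w₃) (hw₁ : w₀ + w₁ + w₂ + w₃ = 1)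
    (hp : ∀ p ∈ [p₀, p₁, p₂, p₃], p ∈ twelvePoints ∧ max (max (L₁ p) (L₂ p)) (L₃ p) ≤ L p)
    (hy : ∀ k, w₀ * p₀ k + w₁ * p₁ k + w₂ * p₂ k + w₃ * p₃ k = y k) :
    convConj3 (convConj3 β₀) y ≤ L y := by
  refine convConj3_convConj3_le_of_mem_convexHull hL
    (mem_convexHull_of_exists_fintype ![w₀, w₁, w₂, w₃] ![p₀, p₁, p₂, p₃] ?_ ?_ ?_ ?_)
  · simpa [Fin.forall_fin_succ] using hw
  · simpa [Fin.sum_univ_four] using hw₁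
  · intro i
    have hpi := hp (![p₀, p₁, p₂, p₃] i) (by fin_cases i <;> simp)
    exact (β₀_eq_max_of_mem hpi.1).trans_le (EReal.coe_le_coe_iff.2 hpi.2)
  · ext k
    simpa [Fin.sum_univ_four] using hy k

/- The weights below are the barycentric coordinates of `y` in a lattice tetrahedron on whose
vertices `max L₁ L₂ L₃` agrees with the affine function used; the seven tetrahedra triangulate the
box. -/

theorem convConj3_convConj3_β₀_le_L₁_or_L₃ (h₁ : 0 ≤ y 1) (h₂ : -1 ≤ y 2) (h₀' : y 0 ≤ 1)
    (h₂' : y 2 ≤ 1) (h₁₀ : y 1 ≤ y 0) :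
    convConj3 (convConj3 β₀) y ≤ L₁ y ∨ convConj3 (convConj3 β₀) y ≤ L₃ y := by
  rcases le_total (2 * y 0 - y 2) 1 with h | h
  · left
    exact convConj3_convConj3_β₀_le_of_tetrahedron L₁_eq
      ((1 - y 2) / 2) ((1 + y 2) / 2 - y 0) (y 0 - y 1) (y 1)
      ![0, 0, -1] ![0, 0, 1] ![1, 0, 1] ![1, 1, 1]
      ⟨by linarith, by linarith, by linarith, by linarith⟩ (by ring)
      (by norm_num [twelvePoints, L₁, L₂, L₃, Matrix.cons_val_two])
      (fun k => by fin_cases k <;> simp only [Fin.reduceFinMk, Matrix.cons_val] <;> ring)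
  right
  rcases le_total (2 * y 1) (y 2 + 1) with h' | h'
  · exact convConj3_convConj3_β₀_le_of_tetrahedron L₃_eq
      (1 - y 0) ((2 * y 0 - y 2 - 1) / 2) ((y 2 + 1 - 2 * y 1) / 2) (y 1)
      ![0, 0, -1] ![1, 0, -1] ![1, 0, 1] ![1, 1, 1]
      ⟨by linarith, by linarith, by linarith, by linarith⟩ (by ring)
      (by norm_num [twelvePoints, L₁, L₂, L₃, Matrix.cons_val_two])
      (fun k => by fin_cases k <;> simp only [Fin.reduceFinMk, Matrix.cons_val] <;> ring)
  · exact convConj3_convConj3_β₀_le_of_tetrahedron L₃_eq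
      (1 - y 0) (y 0 - y 1) (y 1 - (y 2 + 1) / 2) ((y 2 + 1) / 2)
      ![0, 0, -1] ![1, 0, -1] ![1, 1, -1] ![1, 1, 1]
      ⟨by linarith, by linarith, by linarith, by linarith⟩ (by ring)
      (by norm_num [twelvePoints, L₁, L₂, L₃, Matrix.cons_val_two])
      (fun k => by fin_cases k <;> simp only [Fin.reduceFinMk, Matrix.cons_val] <;> ring)

theorem convConj3_convConj3_β₀_le_L₁_or_L₂ (h₀ : 0 ≤ y 0) (h₂ : -1 ≤ y 2) (h₁' : y 1 ≤ 1)
    (h₂' : y 2 ≤ 1) (h₀₁ : y 0 ≤ y 1) :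
    convConj3 (convConj3 β₀) y ≤ L₁ y ∨ convConj3 (convConj3 β₀) y ≤ L₂ y := by
  rcases le_total (2 * y 1 - y 2) 1 with h | h
  · left
    exact convConj3_convConj3_β₀_le_of_tetrahedron L₁_eq
      ((1 - y 2) / 2) ((1 + y 2) / 2 - y 1) (y 1 - y 0) (y 0)
      ![0, 0, -1] ![0, 0, 1] ![0, 1, 1] ![1, 1, 1]
      ⟨by linarith, by linarith, by linarith, by linarith⟩ (by ring)
      (by norm_num [twelvePoints, L₁, L₂, L₃, Matrix.cons_val_two])
      (fun k => by fin_cases k <;> simp only [Fin.reduceFinMk, Matrix.cons_val] <;> ring)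
  rcases le_total (y 0 + y 1 - y 2) 1 with h' | h'
  · left
    exact convConj3_convConj3_β₀_le_of_tetrahedron L₁_eq
      (1 - y 1) (2 * y 1 - y 2 - 1) (y 2 + 1 - y 1 - y 0) (y 0)
      ![0, 0, -1] ![0, 1, 0] ![0, 1, 1] ![1, 1, 1]
      ⟨by linarith, by linarith, by linarith, by linarith⟩ (by ring)
      (by norm_num [twelvePoints, L₁, L₂, L₃, Matrix.cons_val_two])
      (fun k => by fin_cases k <;> simp only [Fin.reduceFinMk, Matrix.cons_val] <;> ring)
  right
  rcases le_total 1 (2 * y 0 - y 2) with h'' | h''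
  · exact convConj3_convConj3_β₀_le_of_tetrahedron L₂_eq
      (1 - y 1) (y 1 - y 0) (y 0 - (y 2 + 1) / 2) ((y 2 + 1) / 2)
      ![0, 0, -1] ![0, 1, -1] ![1, 1, -1] ![1, 1, 1]
      ⟨by linarith, by linarith, by linarith, by linarith⟩ (by ring)
      (by norm_num [twelvePoints, L₁, L₂, L₃, Matrix.cons_val_two])
      (fun k => by fin_cases k <;> simp only [Fin.reduceFinMk, Matrix.cons_val] <;> ring)
  · exact convConj3_convConj3_β₀_le_of_tetrahedron L₂_eq
      (1 - y 1) (y 0 + y 1 - y 2 - 1) (1 + y 2 - 2 * y 0) (y 0)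
      ![0, 0, -1] ![0, 1, -1] ![0, 1, 0] ![1, 1, 1]
      ⟨by linarith, by linarith, by linarith, by linarith⟩ (by ring)
      (by norm_num [twelvePoints, L₁, L₂, L₃, Matrix.cons_val_two])
      (fun k => by fin_cases k <;> simp only [Fin.reduceFinMk, Matrix.cons_val] <;> ring)

end Tetrahedra

theorem convConj3_convConj3_β₀_le_max {y : Fin 3 → ℝ} (hy : y ∈ Set.Icc ![0, 0, -1] ![1, 1, 1]) :
    convConj3 (convConj3 β₀) y ≤ ((max (max (L₁ y) (L₂ y)) (L₃ y) : ℝ) : EReal) := by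
  obtain ⟨⟨h₀, h₁, h₂⟩, h₀', h₁', h₂'⟩ :
      (0 ≤ y 0 ∧ 0 ≤ y 1 ∧ -1 ≤ y 2) ∧ y 0 ≤ 1 ∧ y 1 ≤ 1 ∧ y 2 ≤ 1 := by
    simpa [Pi.le_def, Fin.forall_fin_succ] using hy
  simp only [Monotone.map_max EReal.coe_strictMono.monotone, le_max_iff]
  rcases le_total (y 1) (y 0) with h | h
  · rcases convConj3_convConj3_β₀_le_L₁_or_L₃ h₁ h₂ h₀' h₂' h with hL | hL <;> tauto
  · rcases convConj3_convConj3_β₀_le_L₁_or_L₂ h₀ h₂ h₁' h₂' h with hL | hL <;> tauto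

theorem beta0_convex_envelope :
    (∀ y ∈ convexHull ℝ twelvePoints,
      convConj3 (convConj3 β₀) y = ((max (max (L₁ y) (L₂ y)) (L₃ y) : ℝ) : EReal)) ∧
    (∀ y ∈ twelvePoints, convConj3 (convConj3 β₀) y = β₀ y) := by
  have henv : ∀ y ∈ convexHull ℝ twelvePoints,
      convConj3 (convConj3 β₀) y = ((max (max (L₁ y) (L₂ y)) (L₃ y) : ℝ) : EReal) :=
    fun y hy => le_antisymm
      (convConj3_convConj3_β₀_le_max (convexHull_twelvePoints_subset_Icc hy))
      (max_le_convConj3_convConj3_β₀ y)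
  exact ⟨henv, fun y hy => (henv y (subset_convexHull ℝ _ hy)).trans (β₀_eq_max_of_mem hy).symm⟩
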